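/- Let G = (V,E) be a finite connected simple graph and s ∈ V. Root the layering graph H at the class {s} of layer 0; for each layering class C of layer i ≥ 1 let parent(C) be the unique layering class of layer i−1 adjacent to C in H, and define the bag of C to be C ∪ parent(C), with the bag of {s} being {s}. Then the tree H together with these bags is a tree decomposition of G. -/

import Mathlib

/-!
Every layering class `C` lies in a single layer `i`, so adjacent classes lie in different layers.
The key fact is that a class has at most one neighbour in the layering graph `H` in a lower layer:
two vertices of `C` are joined by a path that stays in layers `≥ i`, and prolonging it by one edge
at each end gives a path in layers `≥ i - 1` between their lower neighbours, which are therefore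
equivalent. Hence on a cycle of `H` the class of largest layer would have two distinct lower
neighbours, so `H` is acyclic; it is connected because `G` is. The nodes whose bag contains `v`
are the class of `v` and its children, a star in `H`; and an edge `uv` of `G` with
`dist s v = dist s u + 1` lies in the bag of the class of `v`, since the class of `u` is its
unique lower neighbour, the parent.
-/

open SimpleGraph

/-- A tree decomposition of a graph `G`, with decomposition tree indexed by `ι`. -/
structure TreeDecomp {V : Type} (G : SimpleGraph V) (ι : Type) : Type where
  /-- the decomposition tree -/
  tree : SimpleGraph ι
  /-- the decomposition tree is a tree -/
  isTree : tree.IsTree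
  /-- the bags -/
  bag : ι → Set V
  /-- every vertex of `G` belongs to some bag -/
  bag_cover : ∀ v : V, ∃ t, v ∈ bag t
  /-- both endpoints of every edge of `G` lie in a common bag -/
  bag_edge : ∀ ⦃u v : V⦄, G.Adj u v → ∃ t, u ∈ bag t ∧ v ∈ bag t
  /-- the nodes whose bag contains a given vertex induce a connected subtree -/
  bag_conn : ∀ v : V, (tree.induce {t | v ∈ bag t}).Connected

/-- `u` and `v` are layering-equivalent w.r.t. source `s`: they lie at the same
distance `i` from `s` and are joined by a path all of whose (intermediate)
vertices are at distance at least `i` from `s`. -/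
def LayerEquiv {V : Type} (G : SimpleGraph V) (s u v : V) : Prop :=
  G.dist s u = G.dist s v ∧
    ∃ p : G.Walk u v, p.IsPath ∧ ∀ w ∈ p.support, G.dist s u ≤ G.dist s w

/-- The layering class of the vertex `v` w.r.t. source `s`. -/
def layeringClassOf {V : Type} (G : SimpleGraph V) (s v : V) : Set V :=
  {u | LayerEquiv G s v u}

/-- `C` is a layering class of `G` w.r.t. source `s`. -/
def IsLayeringClass {V : Type} (G : SimpleGraph V) (s : V) (C : Set V) : Prop :=
  ∃ v, C = layeringClassOf G s v

/-- The layering graph `H`: vertices are the layering classes, two distinct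
classes being adjacent iff `G` has an edge with one endpoint in each. -/
def layeringGraph {V : Type} (G : SimpleGraph V) (s : V) :
    SimpleGraph {C : Set V // IsLayeringClass G s C} where
  Adj C D := C ≠ D ∧ ∃ u ∈ C.1, ∃ w ∈ D.1, G.Adj u w
  symm := by
    constructor
    rintro C D ⟨hne, u, hu, w, hw, h⟩
    exact ⟨hne.symm, w, hw, u, hu, h.symm⟩
  loopless := by constructor; rintro C ⟨hne, -⟩; exact hne rfl

theorem SimpleGraph.isAcyclic_of_lower_adj_unique {W β : Type*} [LinearOrder β]
    {H : SimpleGraph W} (f : W → β) (hf : ∀ ⦃a b⦄, H.Adj a b → f a ≠ f b)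
    (hlow : ∀ ⦃a b c⦄, H.Adj a b → H.Adj a c → f b < f a → f c < f a → b = c) :
    H.IsAcyclic := by
  classical
  intro v c hc
  obtain ⟨m, hm, hmax⟩ := c.support.toFinset.exists_max_image f ⟨v, by simp⟩
  rw [List.mem_toFinset] at hm
  set c' := c.rotate m hm
  have hc' : c'.IsCycle := hc.rotate hm
  have hle : ∀ x ∈ c'.support, f x ≤ f m := fun x hx =>
    hmax x (List.mem_toFinset.mpr ((c.mem_support_rotate_iff m hm).mp hx))
  have hnil := hc'.not_nil
  have hsnd := c'.adj_snd hnil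
  have hpen := (c'.adj_penultimate hnil).symm
  exact hc'.snd_ne_penultimate <| hlow hsnd hpen
    ((hle _ (Walk.getVert_mem_support _ _)).lt_of_ne (hf hsnd).symm)
    ((hle _ (Walk.getVert_mem_support _ _)).lt_of_ne (hf hpen).symm)

theorem SimpleGraph.induce_connected_of_forall_adj {W : Type*} {H : SimpleGraph W} {S : Set W}
    {c : W} (hc : c ∈ S) (h : ∀ d ∈ S, d ≠ c → H.Adj d c) : (H.induce S).Connected := by
  rw [connected_iff_exists_forall_reachable]
  refine ⟨⟨c, hc⟩, fun ⟨d, hd⟩ => ?_⟩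
  obtain rfl | hne := eq_or_ne d c
  · rfl
  · exact (induce_adj.mpr (h d hd hne)).reachable.symm

variable {V : Type} {G : SimpleGraph V} {s u v w : V}

namespace LayerEquiv

theorem of_walk (hd : G.dist s u = G.dist s v) (p : G.Walk u v)
    (hp : ∀ w ∈ p.support, G.dist s u ≤ G.dist s w) : LayerEquiv G s u v := by
  classical
  exact ⟨hd, p.bypass, p.bypass_isPath, fun w hw => hp w (p.support_bypass_subset_support hw)⟩

theorem refl (v : V) : LayerEquiv G s v v :=
  of_walk rfl .nil (by simp)

theorem symm (h : LayerEquiv G s u v) : LayerEquiv G s v u := by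
  obtain ⟨hd, p, -, hp⟩ := h
  exact of_walk hd.symm p.reverse fun w hw => hd ▸ hp w (by simpa using hw)

theorem trans (h₁ : LayerEquiv G s u v) (h₂ : LayerEquiv G s v w) : LayerEquiv G s u w := by
  obtain ⟨hd₁, p, -, hp⟩ := h₁
  obtain ⟨hd₂, q, -, hq⟩ := h₂
  refine of_walk (hd₁.trans hd₂) (p.append q) fun x hx => ?_
  rcases (p.mem_support_append_iff q).mp hx with hx | hx
  exacts [hp x hx, hd₁ ▸ hq x hx]

theorem of_adj (h : G.Adj u v) (hd : G.dist s u = G.dist s v) : LayerEquiv G s u v :=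
  of_walk hd (.cons h .nil) (by simp [hd])

theorem dist_add_one_of_adj_of_lt (h : G.Adj w u) (hlt : G.dist s w < G.dist s u) :
    G.dist s w + 1 = G.dist s u := by
  rcases h.diff_dist_adj (u := s) with h | h | h <;> omega

theorem of_adj_of_adj {u' w' : V} (h : LayerEquiv G s u u') (hw : G.Adj w u) (hw' : G.Adj w' u')
    (hlt : G.dist s w < G.dist s u) (hlt' : G.dist s w' < G.dist s u') :
    LayerEquiv G s w w' := by
  obtain ⟨hd, p, -, hp⟩ := h
  have h₁ := dist_add_one_of_adj_of_lt hw hlt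
  have h₂ := dist_add_one_of_adj_of_lt hw' hlt'
  refine of_walk (by omega) (.cons hw (p.append (.cons hw'.symm .nil))) fun x hx => ?_
  simp only [Walk.support_cons, Walk.mem_support_append_iff, Walk.support_nil, List.mem_cons,
    List.not_mem_nil, or_false] at hx
  rcases hx with rfl | hx | rfl | rfl
  · rfl
  · have := hp x hx; omega
  · omega
  · omega

end LayerEquiv

variable (G s) in
abbrev LayeringClass : Type := {C : Set V // IsLayeringClass G s C}

namespace LayeringClass

variable (G s) in
def of (v : V) : LayeringClass G s := ⟨layeringClassOf G s v, v, rfl⟩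

noncomputable def layer (C : LayeringClass G s) : ℕ := G.dist s C.2.choose

variable {C D D' : LayeringClass G s}

theorem mem_of_self (v : V) : v ∈ (of G s v).1 := LayerEquiv.refl v

theorem eq_of_mem (h : v ∈ C.1) : C = of G s v := by
  obtain ⟨x, hx⟩ := C.2
  have hxv : LayerEquiv G s x v := by rw [hx] at h; exact h
  exact Subtype.ext (hx.trans (Set.ext fun y => ⟨hxv.symm.trans, hxv.trans⟩))

theorem exists_eq_of (C : LayeringClass G s) : ∃ v, C = of G s v := by
  obtain ⟨v, hv⟩ := C.2
  exact ⟨v, Subtype.ext hv⟩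

theorem dist_eq_layer (h : v ∈ C.1) : G.dist s v = C.layer := by
  obtain ⟨hd, -⟩ := C.2.choose_spec ▸ h
  exact hd.symm

theorem layer_of (v : V) : (of G s v).layer = G.dist s v :=
  (dist_eq_layer (mem_of_self v)).symm

theorem eq_of_mem_of_mem (hC : v ∈ C.1) (hD : v ∈ D.1) : C = D :=
  (eq_of_mem hC).trans (eq_of_mem hD).symm

theorem of_eq_or_adj_of_adj (h : G.Adj u v) :
    of G s u = of G s v ∨ (layeringGraph G s).Adj (of G s u) (of G s v) := by
  rw [or_iff_not_imp_left]
  exact fun hne => ⟨hne, u, mem_of_self u, v, mem_of_self v, h⟩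

theorem dist_eq_zero_of_source_mem (h : s ∈ (of G s v).1) : G.dist s v = 0 := by
  rw [h.1, dist_self]

theorem eq_source_of_source_mem (hG : G.Connected) (h : s ∈ (of G s v).1) : v = s :=
  (hG.dist_eq_zero_iff.mp (dist_eq_zero_of_source_mem h)).symm

theorem layer_ne_of_adj (h : (layeringGraph G s).Adj C D) : C.layer ≠ D.layer := by
  obtain ⟨hne, u, hu, v, hv, huv⟩ := h
  intro hl
  rw [← dist_eq_layer hu, ← dist_eq_layer hv] at hl
  have hvC : v ∈ C.1 := by
    rw [eq_of_mem hu]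
    exact LayerEquiv.of_adj huv hl
  exact hne (eq_of_mem_of_mem hvC hv)

theorem eq_of_adj_of_adj_of_layer_lt (h : (layeringGraph G s).Adj C D)
    (h' : (layeringGraph G s).Adj C D') (hD : D.layer < C.layer) (hD' : D'.layer < C.layer) :
    D = D' := by
  obtain ⟨-, u, hu, w, hw, huw⟩ := h
  obtain ⟨-, u', hu', w', hw', hu'w'⟩ := h'
  rw [← dist_eq_layer hu, ← dist_eq_layer hw] at hD
  rw [← dist_eq_layer hu', ← dist_eq_layer hw'] at hD'
  have huu' : LayerEquiv G s u u' := by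
    rw [eq_of_mem hu] at hu'
    exact hu'
  rw [eq_of_mem hw, eq_of_mem hw']
  exact eq_of_mem (LayerEquiv.of_adj_of_adj huu' huw.symm hu'w'.symm hD hD')

theorem reachable_of_of_reachable (h : G.Reachable u v) :
    (layeringGraph G s).Reachable (of G s u) (of G s v) := by
  obtain ⟨p⟩ := h
  induction p with
  | nil => rfl
  | cons huv _ ih =>
    rcases of_eq_or_adj_of_adj (s := s) huv with heq | hadj
    · exact heq ▸ ih
    · exact hadj.reachable.trans ih

end LayeringClass

open LayeringClass

theorem layeringGraph_connected (hG : G.Connected) : (layeringGraph G s).Connected := by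
  rw [connected_iff_exists_forall_reachable]
  refine ⟨of G s s, fun C => ?_⟩
  obtain ⟨v, rfl⟩ := exists_eq_of C
  exact reachable_of_of_reachable (hG s v)

theorem layeringGraph_isAcyclic : (layeringGraph G s).IsAcyclic :=
  isAcyclic_of_lower_adj_unique layer (fun _ _ h => layer_ne_of_adj h)
    (fun _ _ _ h h' => eq_of_adj_of_adj_of_layer_lt h h')

theorem layeringGraph_isTree (hG : G.Connected) : (layeringGraph G s).IsTree :=
  ⟨layeringGraph_connected hG, layeringGraph_isAcyclic⟩

variable (G s) in
def IsParentMap (P : LayeringClass G s → LayeringClass G s) : Prop :=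
  ∀ C : LayeringClass G s, s ∉ C.1 → (layeringGraph G s).Adj C (P C) ∧
    ∀ v ∈ C.1, ∀ w ∈ (P C).1, G.dist s w + 1 = G.dist s v

open Classical in
variable (G s) in
def parentBag (P : LayeringClass G s → LayeringClass G s) (C : LayeringClass G s) : Set V :=
  if s ∈ C.1 then {s} else C.1 ∪ (P C).1

variable {P : LayeringClass G s → LayeringClass G s} {C D : LayeringClass G s}

namespace IsParentMap

theorem layer_lt (hP : IsParentMap G s P) (hs : s ∉ C.1) : (P C).layer < C.layer := by
  obtain ⟨v, hv⟩ := C.exists_eq_of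
  obtain ⟨w, hw⟩ := (P C).exists_eq_of
  have := (hP C hs).2 v (hv ▸ mem_of_self v) w (hw ▸ mem_of_self w)
  rw [hw, hv, layer_of, layer_of]
  omega

theorem eq_of_adj (hP : IsParentMap G s P) (hs : s ∉ C.1) (h : (layeringGraph G s).Adj C D)
    (hD : D.layer < C.layer) : P C = D :=
  eq_of_adj_of_adj_of_layer_lt (hP C hs).1 h (hP.layer_lt hs) hD

end IsParentMap

theorem mem_parentBag_of (hG : G.Connected) (v : V) : v ∈ parentBag G s P (of G s v) := by
  by_cases hs : s ∈ (of G s v).1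
  · rw [parentBag, if_pos hs, eq_source_of_source_mem hG hs]
    rfl
  · rw [parentBag, if_neg hs]
    exact Or.inl (mem_of_self v)

theorem mem_parentBag_of_adj_of_dist_lt (hP : IsParentMap G s P) (h : G.Adj u v)
    (hlt : G.dist s u < G.dist s v) :
    u ∈ parentBag G s P (of G s v) ∧ v ∈ parentBag G s P (of G s v) := by
  have hs : s ∉ (of G s v).1 := fun hs => by
    have := dist_eq_zero_of_source_mem hs
    omega
  have hlayer : (of G s u).layer < (of G s v).layer := by rwa [layer_of, layer_of]
  have hadj := (of_eq_or_adj_of_adj (s := s) h.symm).resolve_left fun he => by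
    rw [he] at hlayer
    exact hlayer.false
  rw [parentBag, if_neg hs, hP.eq_of_adj hs hadj hlayer]
  exact ⟨Or.inr (mem_of_self u), Or.inl (mem_of_self v)⟩

theorem exists_parentBag_of_adj (hG : G.Connected) (hP : IsParentMap G s P) (h : G.Adj u v) :
    ∃ C, u ∈ parentBag G s P C ∧ v ∈ parentBag G s P C := by
  rcases lt_trichotomy (G.dist s u) (G.dist s v) with hlt | heq | hgt
  · exact ⟨_, mem_parentBag_of_adj_of_dist_lt hP h hlt⟩
  · have hs : s ∉ (of G s u).1 := fun hs => by
      obtain rfl := eq_source_of_source_mem hG hs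
      rw [dist_self, dist_eq_one_iff_adj.mpr h] at heq
      exact zero_ne_one heq
    refine ⟨of G s u, ?_⟩
    rw [parentBag, if_neg hs]
    exact ⟨Or.inl (mem_of_self u), Or.inl (LayerEquiv.of_adj h heq)⟩
  · exact ⟨_, (mem_parentBag_of_adj_of_dist_lt hP h.symm hgt).symm⟩

theorem eq_or_adj_of_mem_parentBag (hP : IsParentMap G s P) (h : v ∈ parentBag G s P C) :
    C = of G s v ∨ (layeringGraph G s).Adj C (of G s v) := by
  unfold parentBag at h
  split_ifs at h with hs
  · rw [Set.mem_singleton_iff.mp h]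
    exact Or.inl (eq_of_mem hs)
  · rcases h with h | h
    · exact Or.inl (eq_of_mem h)
    · exact Or.inr (eq_of_mem h ▸ (hP C hs).1)

theorem induce_parentBag_connected (hG : G.Connected) (hP : IsParentMap G s P) (v : V) :
    ((layeringGraph G s).induce {C | v ∈ parentBag G s P C}).Connected :=
  induce_connected_of_forall_adj (mem_parentBag_of hG v) fun _ hC hne =>
    (eq_or_adj_of_mem_parentBag hP hC).resolve_left hne

theorem layering_tree_decomposition_general {V : Type}
    (G : SimpleGraph V) (hG : G.Connected) (s : V)
    (P : {C : Set V // IsLayeringClass G s C} → {C : Set V // IsLayeringClass G s C})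
    (hP : ∀ C, s ∉ C.1 → (layeringGraph G s).Adj C (P C) ∧
      ∀ v ∈ C.1, ∀ w ∈ (P C).1, G.dist s w + 1 = G.dist s v)
    (B : {C : Set V // IsLayeringClass G s C} → Set V)
    (hBroot : ∀ C, s ∈ C.1 → B C = {s})
    (hBne : ∀ C, s ∉ C.1 → B C = C.1 ∪ (P C).1) :
    ∃ td : TreeDecomp G {C : Set V // IsLayeringClass G s C},
      td.tree = layeringGraph G s ∧ td.bag = B := by
  obtain rfl : B = parentBag G s P := funext fun C => by
    by_cases hs : s ∈ C.1
    · rw [hBroot C hs, parentBag, if_pos hs]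
    · rw [hBne C hs, parentBag, if_neg hs]
  exact ⟨⟨layeringGraph G s, layeringGraph_isTree hG, parentBag G s P,
    fun v => ⟨_, mem_parentBag_of hG v⟩,
    fun _ _ => exists_parentBag_of_adj hG hP, induce_parentBag_connected hG hP⟩, rfl, rfl⟩

/-- Root the layering graph `H` at the class `{s}` of layer `0`;
for each layering class `C` of layer `i ≥ 1` let `P C` be the (unique) layering
class of layer `i − 1` adjacent to `C` in `H`, and define the bag of `C` to be
`C ∪ P C`, with the bag of `{s}` being `{s}`. Then the tree `H` together with
these bags is a tree decomposition of `G`. -/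
theorem layering_tree_decomposition {V : Type} [Fintype V]
    (G : SimpleGraph V) (hG : G.Connected) (s : V)
    (P : {C : Set V // IsLayeringClass G s C} → {C : Set V // IsLayeringClass G s C})
    (hP : ∀ C, s ∉ C.1 → (layeringGraph G s).Adj C (P C) ∧
      ∀ v ∈ C.1, ∀ w ∈ (P C).1, G.dist s w + 1 = G.dist s v)
    (B : {C : Set V // IsLayeringClass G s C} → Set V)
    (hBroot : ∀ C, s ∈ C.1 → B C = {s})
    (hBne : ∀ C, s ∉ C.1 → B C = C.1 ∪ (P C).1) :
    ∃ td : TreeDecomp G {C : Set V // IsLayeringClass G s C},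
      td.tree = layeringGraph G s ∧ td.bag = B :=
  layering_tree_decomposition_general G hG s P hP B hBroot hBne
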